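/- (Theorem 3) Let y₀ ∈ ℝ, b > 0, ε > 0, and let p : ℝ → ℝ be continuous, strictly positive, strictly decreasing and strictly convex on [y₀, ∞). Suppose the least natural number N with S_l(ε,N) ≥ b exists and equals n₂¹, and let the integer j ≥ 2 satisfy j ≥ 1 + (1/2)·((p(y₀) − p(y₀ + ε·n₂¹ − ε))/p(y₀ + ε·n₂¹)). Then for every x with 0 < x ≤ b the following holds: if m is the least natural number with S_l(ε/j, m) ≥ x, m > j, and Y ≥ y₀ satisfies ∫_{y₀}^{Y} p(y) dy = x, then |Y − (y₀ + (ε/j)·m)| < ε. -/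

import Mathlib

open Set Finset

/-!
Put `h = ε / j`. Since `p` is antitone, the lower sum underestimates the integral, so
`Y ≤ y₀ + m h`. Since `p` is convex, the integral is at most the trapezoidal sum, which is the lower
sum plus the correction `h / 2 · (p y₀ - p (y₀ + N h))`. Each coarse rectangle of width `ε` lies
under the `j` fine rectangles of width `h` it contains, so `S_l(ε, n₂¹) ≤ S_l(h, j n₂¹)` and the
minimality of `m` gives `m ≤ j n₂¹`. Together with the criterion on `j`, this makes the `j - 1`
fine rectangles between steps `m - j` and `m - 1` outweigh the trapezoidal correction at step
`m - j`; hence `∫_{y₀}^{y₀+(m-j)h} p ≤ S_l(h, m - 1) < x`, i.e. `Y > y₀ + m h - ε`.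
-/

noncomputable def lowerSum (p : ℝ → ℝ) (y₀ h : ℝ) (N : ℕ) : ℝ :=
  ∑ i ∈ Finset.Icc 1 N, h * p (y₀ + (i : ℝ) * h)

theorem ConvexOn.integral_le_trapezoid {p : ℝ → ℝ} {t u : ℝ}
    (hconv : ConvexOn ℝ (Icc t u) p) (hint : IntervalIntegrable p MeasureTheory.volume t u)
    (htu : t ≤ u) :
    ∫ y in t..u, p y ≤ (u - t) / 2 * (p t + p u) := by
  rcases htu.eq_or_lt with rfl | htu
  · simp
  have hchord : ∀ y ∈ Ioo t u, p y ≤ ((u - y) * p t + (y - t) * p u) / (u - t) := by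
    intro y hy
    rw [le_div_iff₀ (sub_pos.2 htu), mul_comm]
    exact hconv.secant_mono_aux1 (left_mem_Icc.2 htu.le) (right_mem_Icc.2 htu.le) hy.1 hy.2
  calc ∫ y in t..u, p y
      ≤ ∫ y in t..u, ((u - y) * p t + (y - t) * p u) / (u - t) :=
        intervalIntegral.integral_mono_on_of_le_Ioo htu.le hint
          (by apply Continuous.intervalIntegrable; fun_prop) hchord
    _ = (u - t) / 2 * (p t + p u) := by
        rw [intervalIntegral.integral_div, intervalIntegral.integral_add
          (by apply Continuous.intervalIntegrable; fun_prop)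
          (by apply Continuous.intervalIntegrable; fun_prop)]
        rw [intervalIntegral.integral_mul_const, intervalIntegral.integral_mul_const,
          intervalIntegral.integral_comp_sub_left (fun y ↦ y),
          intervalIntegral.integral_comp_sub_right (fun y ↦ y), integral_id, integral_id]
        field_simp
        ring

theorem lowerSum_succ (p : ℝ → ℝ) (y₀ h : ℝ) (N : ℕ) :
    lowerSum p y₀ h (N + 1) = lowerSum p y₀ h N + h * p (y₀ + (N + 1 : ℕ) * h) := by
  rw [lowerSum, Finset.sum_Icc_succ_top (Nat.le_add_left 1 N)]
  rfl

theorem lowerSum_eq_sum_range (p : ℝ → ℝ) (y₀ h : ℝ) (N : ℕ) :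
    lowerSum p y₀ h N = ∑ k ∈ range N, h * p (y₀ + (k + 1 : ℕ) * h) := by
  induction N with
  | zero => rfl
  | succ N ih => rw [lowerSum_succ, ih, sum_range_succ]

section

variable {p : ℝ → ℝ} {y₀ h : ℝ}

theorem AntitoneOn.intervalIntegrable_of_Ici (hanti : AntitoneOn p (Ici y₀)) {a b : ℝ}
    (ha : y₀ ≤ a) (hb : y₀ ≤ b) : IntervalIntegrable p MeasureTheory.volume a b :=
  (hanti.mono (ordConnected_Ici.uIcc_subset ha hb)).intervalIntegrable

theorem integral_eq_sum_integral_steps (hanti : AntitoneOn p (Ici y₀)) (hh : 0 ≤ h) (N : ℕ) :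
    ∫ y in y₀..y₀ + N * h, p y =
      ∑ k ∈ range N, ∫ y in y₀ + k * h..y₀ + (k + 1 : ℕ) * h, p y := by
  have hnode (k : ℕ) : y₀ ≤ y₀ + k * h := le_add_of_nonneg_right (by positivity)
  simpa using (intervalIntegral.sum_integral_adjacent_intervals (a := fun k : ℕ ↦ y₀ + k * h)
    fun k _ ↦ hanti.intervalIntegrable_of_Ici (hnode k) (hnode (k + 1))).symm

theorem lowerSum_le_integral (hanti : AntitoneOn p (Ici y₀)) (hh : 0 ≤ h) (N : ℕ) :
    lowerSum p y₀ h N ≤ ∫ y in y₀..y₀ + N * h, p y := by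
  have hnode (k : ℕ) : y₀ ≤ y₀ + k * h := le_add_of_nonneg_right (by positivity)
  rw [lowerSum_eq_sum_range, integral_eq_sum_integral_steps hanti hh]
  gcongr with k
  have hstep : y₀ + k * h ≤ y₀ + (k + 1 : ℕ) * h := by push_cast; linarith
  calc h * p (y₀ + (k + 1 : ℕ) * h)
      = ∫ _ in y₀ + k * h..y₀ + (k + 1 : ℕ) * h, p (y₀ + (k + 1 : ℕ) * h) := by
        rw [intervalIntegral.integral_const, smul_eq_mul]; push_cast; ring
    _ ≤ _ := intervalIntegral.integral_mono_on hstep intervalIntegrable_const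
        (hanti.intervalIntegrable_of_Ici (hnode k) (hnode (k + 1)))
        fun y hy ↦ hanti (hnode k |>.trans hy.1) (hnode (k + 1)) hy.2

theorem integral_le_lowerSum_add (hanti : AntitoneOn p (Ici y₀))
    (hconv : ConvexOn ℝ (Ici y₀) p) (hh : 0 ≤ h) (N : ℕ) :
    ∫ y in y₀..y₀ + N * h, p y ≤ lowerSum p y₀ h N + h / 2 * (p y₀ - p (y₀ + N * h)) := by
  have hnode (k : ℕ) : y₀ ≤ y₀ + k * h := le_add_of_nonneg_right (by positivity)
  have htelescope := sum_range_sub' (fun k : ℕ ↦ p (y₀ + k * h)) N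
  simp only [Nat.cast_zero, zero_mul, add_zero] at htelescope
  rw [integral_eq_sum_integral_steps hanti hh, lowerSum_eq_sum_range, ← htelescope, mul_sum,
    ← sum_add_distrib]
  gcongr with k
  have hstep : y₀ + k * h ≤ y₀ + (k + 1 : ℕ) * h := by push_cast; linarith
  have hconv_step := hconv.subset (Icc_subset_Ici_iff hstep |>.2 (hnode k)) (convex_Icc _ _)
  calc _ ≤ _ := hconv_step.integral_le_trapezoid
        (hanti.intervalIntegrable_of_Ici (hnode k) (hnode (k + 1))) hstep
    _ = _ := by push_cast; ring

theorem lowerSum_add_le (hanti : AntitoneOn p (Ici y₀)) (hh : 0 ≤ h) (k d : ℕ) :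
    lowerSum p y₀ h k + d * (h * p (y₀ + (k + d : ℕ) * h)) ≤ lowerSum p y₀ h (k + d) := by
  induction d with
  | zero => simp
  | succ d ih =>
    have hnode (k : ℕ) : y₀ ≤ y₀ + k * h := le_add_of_nonneg_right (by positivity)
    have hmono : p (y₀ + (k + d + 1 : ℕ) * h) ≤ p (y₀ + (k + d : ℕ) * h) :=
      hanti (hnode _) (hnode _) (by push_cast; nlinarith)
    rw [← add_assoc, lowerSum_succ]
    push_cast at *
    nlinarith [mul_le_mul_of_nonneg_left hmono (by positivity : (0:ℝ) ≤ d * h)]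

theorem lowerSum_mul_le (hanti : AntitoneOn p (Ici y₀)) (hh : 0 ≤ h) (j K : ℕ) :
    lowerSum p y₀ (j * h) K ≤ lowerSum p y₀ h (j * K) := by
  induction K with
  | zero => simp [lowerSum]
  | succ K ih =>
    have := lowerSum_add_le hanti hh (j * K) j
    rw [lowerSum_succ, mul_add_one]
    push_cast at *
    rw [show y₀ + (K + 1) * (j * h) = y₀ + (j * K + j) * h by ring]
    linarith

theorem strictMonoOn_integral_of_pos (hanti : AntitoneOn p (Ici y₀))
    (hpos : ∀ y ∈ Ici y₀, 0 < p y) : StrictMonoOn (fun t ↦ ∫ y in y₀..t, p y) (Ici y₀) := by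
  intro a ha b hb hab
  dsimp only
  rw [← intervalIntegral.integral_add_adjacent_intervals
    (hanti.intervalIntegrable_of_Ici le_rfl ha) (hanti.intervalIntegrable_of_Ici ha hb)]
  linarith [intervalIntegral.intervalIntegral_pos_of_pos_on
    (hanti.intervalIntegrable_of_Ici ha hb) (fun y hy ↦ hpos y (ha.trans hy.1.le)) hab]

theorem integral_le_lowerSum_of_drop_le (hanti : AntitoneOn p (Ici y₀))
    (hconv : ConvexOn ℝ (Ici y₀) p) (hh : 0 ≤ h) {k d : ℕ}
    (hdrop : (p y₀ - p (y₀ + k * h)) / 2 ≤ d * p (y₀ + (k + d : ℕ) * h)) :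
    ∫ y in y₀..y₀ + k * h, p y ≤ lowerSum p y₀ h (k + d) := by
  have := integral_le_lowerSum_add hanti hconv hh k
  have := lowerSum_add_le hanti hh k d
  nlinarith [mul_le_mul_of_nonneg_left hdrop hh]

theorem drop_le_of_criterion (hanti : AntitoneOn p (Ici y₀)) {r a b c t : ℝ}
    (hb : 0 < p b) (hc : y₀ ≤ c) (hca : c ≤ a) (ht : y₀ ≤ t) (htb : t ≤ b)
    (hr : r ≥ 1 + 1 / 2 * ((p y₀ - p a) / p b)) :
    (p y₀ - p c) / 2 ≤ (r - 1) * p t := by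
  have ha : p a ≤ p y₀ := hanti self_mem_Ici (hc.trans hca) (hc.trans hca)
  have hr1 : 0 ≤ r - 1 := by
    have : 0 ≤ (p y₀ - p a) / p b := div_nonneg (by linarith) hb.le
    linarith
  calc (p y₀ - p c) / 2 ≤ (p y₀ - p a) / 2 := by
        linarith [hanti hc (hc.trans hca) hca]
    _ = 1 / 2 * ((p y₀ - p a) / p b) * p b := by field_simp
    _ ≤ (r - 1) * p b := by gcongr; linarith
    _ ≤ (r - 1) * p t := by gcongr; exact hanti ht (ht.trans htb) htb

end

theorem stmt_16_general (y₀ b ε : ℝ) (hε : 0 < ε)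
    (p : ℝ → ℝ)
    (hpos : ∀ y ∈ Set.Ici y₀, 0 < p y)
    (hanti : StrictAntiOn p (Set.Ici y₀))
    (hconv : StrictConvexOn ℝ (Set.Ici y₀) p)
    (n₂₁ : ℕ) (h₁ : IsLeast {N : ℕ | b ≤ lowerSum p y₀ ε N} n₂₁)
    (j : ℕ) (hj : 2 ≤ j)
    (hcrit : (j : ℝ) ≥ 1 + (1 / 2) *
      ((p y₀ - p (y₀ + ε * (n₂₁ : ℝ) - ε)) / p (y₀ + ε * (n₂₁ : ℝ)))) :
    ∀ x : ℝ, 0 < x → x ≤ b →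
      ∀ m : ℕ, IsLeast {N : ℕ | x ≤ lowerSum p y₀ (ε / (j : ℝ)) N} m → j < m →
        ∀ Y : ℝ, y₀ ≤ Y → (∫ y in y₀..Y, p y) = x →
          |Y - (y₀ + (ε / (j : ℝ)) * (m : ℝ))| < ε := by
  intro x _ hxb m hm hjm Y hY hYx
  have hj1 : (1 : ℝ) ≤ j := mod_cast (by omega : 1 ≤ j)
  have hjm' : (j : ℝ) < m := mod_cast hjm
  set h := ε / j with h_def
  have hh : 0 < h := by positivity
  have hεh : ε = j * h := by rw [h_def]; field_simp
  have hanti' := hanti.antitoneOn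
  have hF := strictMonoOn_integral_of_pos hanti' hpos
  have hnode (k : ℕ) : y₀ ≤ y₀ + k * h := le_add_of_nonneg_right (by positivity)
  have hm_le : (m : ℝ) ≤ j * n₂₁ := mod_cast hm.2 <| calc
    x ≤ lowerSum p y₀ (j * h) n₂₁ := hεh ▸ hxb.trans h₁.1
    _ ≤ lowerSum p y₀ h (j * n₂₁) := lowerSum_mul_le hanti' hh.le j n₂₁
  have hupper : Y ≤ y₀ + m * h := (hF.le_iff_le hY (hnode m)).1
    (hYx ▸ hm.1.trans (lowerSum_le_integral hanti' hh.le m))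
  have hdrop : (p y₀ - p (y₀ + (m - j : ℕ) * h)) / 2 ≤
      (j - 1 : ℕ) * p (y₀ + (m - j + (j - 1) : ℕ) * h) := by
    rw [show m - j + (j - 1) = m - 1 by omega]
    push_cast [Nat.cast_sub hjm.le, Nat.cast_sub (by omega : 1 ≤ m),
      Nat.cast_sub (by omega : 1 ≤ j)]
    refine drop_le_of_criterion hanti' (hpos _ (Set.mem_Ici.2 ?_)) ?_ ?_ ?_ ?_ hcrit <;> nlinarith
  have hlower : y₀ + (m - j : ℕ) * h < Y := by
    refine (hF.lt_iff_lt (hnode _) hY).1 (hYx ▸ ?_)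
    calc _ ≤ lowerSum p y₀ h (m - j + (j - 1)) :=
          integral_le_lowerSum_of_drop_le hanti' hconv.convexOn hh.le hdrop
      _ < x := lt_of_not_ge fun hx ↦ by have := hm.2 hx; omega
  push_cast [Nat.cast_sub hjm.le] at hlower
  rw [abs_lt]
  constructor <;> nlinarith

theorem stmt_16 (y₀ b ε : ℝ) (hb : 0 < b) (hε : 0 < ε)
    (p : ℝ → ℝ)
    (hc : ContinuousOn p (Set.Ici y₀))
    (hpos : ∀ y ∈ Set.Ici y₀, 0 < p y)
    (hanti : StrictAntiOn p (Set.Ici y₀))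
    (hconv : StrictConvexOn ℝ (Set.Ici y₀) p)
    (n₂₁ : ℕ) (h₁ : IsLeast {N : ℕ | b ≤ lowerSum p y₀ ε N} n₂₁)
    (j : ℕ) (hj : 2 ≤ j)
    (hcrit : (j : ℝ) ≥ 1 + (1 / 2) *
      ((p y₀ - p (y₀ + ε * (n₂₁ : ℝ) - ε)) / p (y₀ + ε * (n₂₁ : ℝ)))) :
    ∀ x : ℝ, 0 < x → x ≤ b →
      ∀ m : ℕ, IsLeast {N : ℕ | x ≤ lowerSum p y₀ (ε / (j : ℝ)) N} m → j < m →
        ∀ Y : ℝ, y₀ ≤ Y → (∫ y in y₀..Y, p y) = x →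
          |Y - (y₀ + (ε / (j : ℝ)) * (m : ℝ))| < ε :=
  stmt_16_general y₀ b ε hε p hpos hanti hconv n₂₁ h₁ j hj hcrit
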